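/- arXiv:2311.06680 — 4 statements merged into one kernel-verified Lean document; each statement's English description precedes it below -/
import Mathlib

section
/- The average over one period 2π/ω of N(t)·y(t), where N(t) = −(8/a²)·cos(2ωt) and y(t) = y* + (H/2)(ϑ + a·sin(ωt) − 0)², equals H. That is, (ω/2π)·∫₀^{2π/ω} N(t)·(y* + (H/2)(ϑ + a·sin(ωt))²) dt = H, for any reals y*, H, ϑ and a ≠ 0, ω > 0. -/
theorem average_hessian_estimate (ystar H ϑ a ω : ℝ) (ha : a ≠ 0) (hω : 0 < ω) :
    (ω / (2 * Real.pi)) *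
      ∫ t in (0:ℝ)..(2 * Real.pi / ω),
        (-(8 / a ^ 2) * Real.cos (2 * (ω * t))) *
          (ystar + (H / 2) * (ϑ + a * Real.sin (ω * t)) ^ 2) = H := by
  have hω' : ω ≠ 0 := ne_of_gt hω
  set F : ℝ → ℝ := fun t => -(8 / a ^ 2) *
      ((ystar + H * ϑ ^ 2 / 2) * Real.sin (2 * ω * t) / (2 * ω)
      + (H * ϑ * a) * (Real.cos (ω * t) / (2 * ω) - Real.cos (3 * ω * t) / (6 * ω))
      + (H * a ^ 2 / 2) * (Real.sin (2 * ω * t) / (4 * ω) - t / 4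
          - Real.sin (4 * ω * t) / (16 * ω)))
    with hF
  have key : ∀ t : ℝ, HasDerivAt F
      ((-(8 / a ^ 2) * Real.cos (2 * (ω * t))) *
          (ystar + (H / 2) * (ϑ + a * Real.sin (ω * t)) ^ 2)) t := by
    intro t
    have hlin : ∀ k : ℝ, HasDerivAt (fun u : ℝ => k * ω * u) (k * ω) t := by
      intro k
      simpa using (hasDerivAt_id t).const_mul (k * ω)
    have hsin : ∀ k : ℝ, HasDerivAt (fun u : ℝ => Real.sin (k * ω * u))
        (Real.cos (k * ω * t) * (k * ω)) t :=
      fun k => (Real.hasDerivAt_sin (k * ω * t)).comp t (hlin k)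
    have hcos : ∀ k : ℝ, HasDerivAt (fun u : ℝ => Real.cos (k * ω * u))
        (-Real.sin (k * ω * t) * (k * ω)) t :=
      fun k => (Real.hasDerivAt_cos (k * ω * t)).comp t (hlin k)
    have h1 : HasDerivAt (fun u : ℝ => ω * u) ω t := by
      simpa using (hasDerivAt_id t).const_mul ω
    have hcos1 : HasDerivAt (fun u : ℝ => Real.cos (ω * u))
        (-Real.sin (ω * t) * ω) t := (Real.hasDerivAt_cos (ω * t)).comp t h1
    have hD : HasDerivAt F
        (-(8 / a ^ 2) *
          (((ystar + H * ϑ ^ 2 / 2) * (Real.cos (2 * ω * t) * (2 * ω))) / (2 * ω)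
          + (H * ϑ * a) * ((-Real.sin (ω * t) * ω) / (2 * ω)
              - (-Real.sin (3 * ω * t) * (3 * ω)) / (6 * ω))
          + (H * a ^ 2 / 2) * ((Real.cos (2 * ω * t) * (2 * ω)) / (4 * ω) - 1 / 4
              - (Real.cos (4 * ω * t) * (4 * ω)) / (16 * ω)))) t := by
      rw [hF]
      exact (((((hsin 2).const_mul (ystar + H * ϑ ^ 2 / 2)).div_const (2 * ω)).add
        (((hcos1.div_const (2 * ω)).sub ((hcos 3).div_const (6 * ω))).const_mul
          (H * ϑ * a))).add
        (((((hsin 2).div_const (4 * ω)).sub ((hasDerivAt_id t).div_const 4)).sub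
          ((hsin 4).div_const (16 * ω))).const_mul (H * a ^ 2 / 2))).const_mul
        (-(8 / a ^ 2))
    have hD' : HasDerivAt F
        (-(8 / a ^ 2) *
          ((ystar + H * ϑ ^ 2 / 2) * Real.cos (2 * ω * t)
          + (H * ϑ * a) * ((Real.sin (3 * ω * t) - Real.sin (ω * t)) / 2)
          + (H * a ^ 2 / 2) * (Real.cos (2 * ω * t) / 2 - 1 / 4
              - Real.cos (4 * ω * t) / 4))) t := by
      convert hD using 1
      field_simp
      ring
    convert hD' using 1
    have e2 : 2 * ω * t = 2 * (ω * t) := by ring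
    have e3 : 3 * ω * t = 3 * (ω * t) := by ring
    have e4 : 4 * ω * t = 2 * (2 * (ω * t)) := by ring
    rw [e2, e3, e4, Real.sin_three_mul, Real.cos_two_mul, Real.cos_two_mul,
      Real.cos_two_mul]
    linear_combination (-(8 / a ^ 2) * (2 * (H * ϑ * a) * Real.sin (ω * t)
        + (H * a ^ 2 / 2) * (2 * Real.cos (ω * t) ^ 2 - 1))) *
      Real.sin_sq_add_cos_sq (ω * t)
  have hInt := intervalIntegral.integral_eq_sub_of_hasDerivAt
    (f := F) (a := 0) (b := 2 * Real.pi / ω)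
    (fun t _ => key t)
    (by apply Continuous.intervalIntegrable; fun_prop)
  rw [hInt, hF]
  have ht2 : 2 * ω * (2 * Real.pi / ω) = 2 * (2 * Real.pi) := by field_simp
  have ht1 : ω * (2 * Real.pi / ω) = 1 * (2 * Real.pi) := by field_simp
  have ht3 : 3 * ω * (2 * Real.pi / ω) = 3 * (2 * Real.pi) := by field_simp
  have ht4 : 4 * ω * (2 * Real.pi / ω) = 4 * (2 * Real.pi) := by field_simp
  have s2 : Real.sin (2 * (2 * Real.pi)) = 0 := by
    rw [show (2:ℝ) * (2 * Real.pi) = (4:ℕ) * Real.pi by push_cast; ring]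
    exact Real.sin_nat_mul_pi 4
  have s4 : Real.sin (4 * (2 * Real.pi)) = 0 := by
    rw [show (4:ℝ) * (2 * Real.pi) = (8:ℕ) * Real.pi by push_cast; ring]
    exact Real.sin_nat_mul_pi 8
  have c1 : Real.cos (1 * (2 * Real.pi)) = 1 := by
    simpa using Real.cos_nat_mul_two_pi 1
  have c3 : Real.cos (3 * (2 * Real.pi)) = 1 := by
    simpa using Real.cos_nat_mul_two_pi 3
  have hπ : Real.pi ≠ 0 := Real.pi_ne_zero
  simp only [ht2, ht1, ht3, ht4, s2, s4, c1, c3, mul_zero, zero_mul, zero_div,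
    Real.sin_zero, Real.cos_zero]
  field_simp
  ring
end

section
/- The average over one period 2π/ω of M(t)·y(t), where M(t) = (2/a)·sin(ωt) and y(t) = y* + (H/2)(ϑ + a·sin(ωt))², equals H·ϑ. That is, (ω/2π)·∫₀^{2π/ω} M(t)·(y* + (H/2)(ϑ + a·sin(ωt))²) dt = H·ϑ, for reals y*, H, ϑ and a ≠ 0, ω > 0. -/
open Real intervalIntegral

theorem average_gradient_estimate (ystar H ϑ a ω : ℝ) (ha : a ≠ 0) (hω : 0 < ω) :
    (ω / (2 * Real.pi)) *
      ∫ t in (0:ℝ)..(2 * Real.pi / ω),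
        ((2 / a) * Real.sin (ω * t)) *
          (ystar + (H / 2) * (ϑ + a * Real.sin (ω * t)) ^ 2) = H * ϑ := by
  have hω' : ω ≠ 0 := ne_of_gt hω
  set F : ℝ → ℝ := fun t =>
    (2 / a) * (ystar + H * ϑ ^ 2 / 2) * (-Real.cos (ω * t) / ω)
      + H * ϑ * (t - Real.sin (ω * t) * Real.cos (ω * t) / ω)
      + H * a * (-Real.cos (ω * t) / ω + Real.cos (ω * t) ^ 3 / (3 * ω)) with hF
  have hderiv : ∀ t ∈ Set.uIcc (0:ℝ) (2 * Real.pi / ω), HasDerivAt F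
      (((2 / a) * Real.sin (ω * t)) *
          (ystar + (H / 2) * (ϑ + a * Real.sin (ω * t)) ^ 2)) t := by
    intro t _
    have hlin : HasDerivAt (fun t : ℝ => ω * t) ω t := by
      simpa using (hasDerivAt_id t).const_mul ω
    have hs : HasDerivAt (fun t => Real.sin (ω * t)) (Real.cos (ω * t) * ω) t :=
      (Real.hasDerivAt_sin (ω * t)).comp t hlin
    have hc : HasDerivAt (fun t => Real.cos (ω * t)) (-Real.sin (ω * t) * ω) t :=
      (Real.hasDerivAt_cos (ω * t)).comp t hlin
    have h1 : HasDerivAt (fun t => -Real.cos (ω * t) / ω) (Real.sin (ω * t)) t := by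
      have := (hc.neg).div_const ω
      refine this.congr_deriv ?_
      field_simp
    have h2 : HasDerivAt (fun t => t - Real.sin (ω * t) * Real.cos (ω * t) / ω)
        (1 - (Real.cos (ω * t) ^ 2 - Real.sin (ω * t) ^ 2)) t := by
      have := (hasDerivAt_id t).sub (((hs.mul hc)).div_const ω)
      refine this.congr_deriv ?_
      field_simp
      ring
    have h3 : HasDerivAt (fun t => -Real.cos (ω * t) / ω + Real.cos (ω * t) ^ 3 / (3 * ω))
        (Real.sin (ω * t) - Real.cos (ω * t) ^ 2 * Real.sin (ω * t)) t := by
      have := h1.add ((((hc.pow 3)).div_const (3 * ω)))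
      refine this.congr_deriv ?_
      field_simp
      ring
    have hF' := ((h1.const_mul ((2 / a) * (ystar + H * ϑ ^ 2 / 2))).add
        (h2.const_mul (H * ϑ))).add (h3.const_mul (H * a))
    have hpy : Real.sin (ω * t) ^ 2 + Real.cos (ω * t) ^ 2 = 1 :=
      Real.sin_sq_add_cos_sq _
    have hcos : Real.cos (ω * t) ^ 2 = 1 - Real.sin (ω * t) ^ 2 := by nlinarith [hpy]
    refine hF'.congr_deriv ?_
    rw [hcos]
    field_simp
    ring
  have hint : IntervalIntegrable (fun t =>
      ((2 / a) * Real.sin (ω * t)) *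
          (ystar + (H / 2) * (ϑ + a * Real.sin (ω * t)) ^ 2)) MeasureTheory.volume
      0 (2 * Real.pi / ω) := by
    exact (Continuous.intervalIntegrable (by fun_prop) _ _)
  rw [intervalIntegral.integral_eq_sub_of_hasDerivAt hderiv hint]
  have harg : ω * (2 * Real.pi / ω) = 2 * Real.pi := by field_simp
  simp only [hF, harg, mul_zero, Real.cos_two_pi, Real.sin_two_pi, Real.cos_zero, Real.sin_zero]
  have hπ : Real.pi ≠ 0 := Real.pi_ne_zero
  field_simp
  ring
end

section
/- Suppose V : [0,∞) → [0,∞) and s : [0,∞) → ℝ are differentiable, with V'(t) ≤ −m·V(t) + n·s'(t)·V(t) for constants m, n > 0, and s(t) ≤ s* for all t ≥ 0. Then V(t) ≤ e^{n·s*}·V(0)·e^{−m t} for all t ≥ 0, provided s(t) ≥ 0. -/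
theorem lyapunov_moving_boundary (V s : ℝ → ℝ) (m n sstar : ℝ)
    (hm : 0 < m) (hn : 0 < n)
    (hV : Differentiable ℝ V) (hs : Differentiable ℝ s)
    (hVpos : ∀ t, 0 ≤ t → 0 ≤ V t)
    (hineq : ∀ t, 0 ≤ t → deriv V t ≤ -m * V t + n * deriv s t * V t)
    (hsub : ∀ t, 0 ≤ t → s t ≤ sstar)
    (hslb : ∀ t, 0 ≤ t → 0 ≤ s t) :
    ∀ t, 0 ≤ t → V t ≤ Real.exp (n * sstar) * V 0 * Real.exp (-m * t) := by
  set F : ℝ → ℝ := fun t => V t * Real.exp (m * t - n * s t) with hF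
  have hFderiv : ∀ t : ℝ, HasDerivAt F
      ((deriv V t + (m - n * deriv s t) * V t) * Real.exp (m * t - n * s t)) t := by
    intro t
    have h1 : HasDerivAt (fun t : ℝ => m * t - n * s t) (m - n * deriv s t) t := by
      have := ((hasDerivAt_id t).const_mul m).sub ((hs t).hasDerivAt.const_mul n)
      simp at this; exact this
    have h2 : HasDerivAt (fun t => Real.exp (m * t - n * s t))
        (Real.exp (m * t - n * s t) * (m - n * deriv s t)) t := h1.exp
    have : HasDerivAt F _ t := ((hV t).hasDerivAt.mul h2)
    convert this using 1
    ring
  have hanti : AntitoneOn F (Set.Ici (0:ℝ)) := by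
    apply antitoneOn_of_deriv_nonpos (convex_Ici 0)
    · exact (Differentiable.continuous (fun t => (hFderiv t).differentiableAt)).continuousOn
    · intro t ht
      exact ((hFderiv t).differentiableAt).differentiableWithinAt
    · intro t ht
      rw [interior_Ici] at ht
      have ht0 : (0:ℝ) ≤ t := le_of_lt ht
      rw [(hFderiv t).deriv]
      have h := hineq t ht0
      have hVt := hVpos t ht0
      have : deriv V t + (m - n * deriv s t) * V t ≤ 0 := by nlinarith
      exact mul_nonpos_of_nonpos_of_nonneg this (Real.exp_pos _).le
  intro t ht
  have hFt : F t ≤ F 0 := hanti (Set.self_mem_Ici) ht ht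
  have hF0 : F 0 = V 0 * Real.exp (-(n * s 0)) := by simp [hF]
  have hVt : V t = F t * Real.exp (-(m * t - n * s t)) := by
    simp only [hF]
    rw [mul_assoc, ← Real.exp_add]
    simp
  rw [hVt]
  have hexp : Real.exp (-(m * t - n * s t)) ≤ Real.exp (n * sstar) * Real.exp (-m * t) := by
    rw [← Real.exp_add]
    apply Real.exp_le_exp.mpr
    have := hsub t ht
    nlinarith
  calc F t * Real.exp (-(m * t - n * s t)) ≤ F 0 * Real.exp (-(m * t - n * s t)) := by
        apply mul_le_mul_of_nonneg_right hFt (Real.exp_pos _).le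
    _ ≤ V 0 * Real.exp (-(m * t - n * s t)) := by
        rw [hF0]
        have hV0 : 0 ≤ V 0 := hVpos 0 le_rfl
        have : Real.exp (-(n * s 0)) ≤ 1 := by
          apply Real.exp_le_one_iff.mpr
          have := hslb 0 le_rfl
          nlinarith
        have h1 : V 0 * Real.exp (-(n * s 0)) ≤ V 0 := by nlinarith
        exact mul_le_mul_of_nonneg_right h1 (Real.exp_pos _).le
    _ ≤ V 0 * (Real.exp (n * sstar) * Real.exp (-m * t)) := by
        have hV0 : 0 ≤ V 0 := hVpos 0 le_rfl
        exact mul_le_mul_of_nonneg_left hexp hV0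
    _ = Real.exp (n * sstar) * V 0 * Real.exp (-m * t) := by ring
end

section
/- Suppose u(x,t) satisfies u(s(t), t) = 0 for all t, where s : ℝ → ℝ is smooth and strictly increasing on [t, t+D] with inverse s⁻¹, and u is smooth. Then ∫_t^{t+D} ∫_{s(τ)}^{s(t+D)} u_xx(x, τ) dx dτ = −∫_{s(t)}^{s(t+D)} u(x, t) dx. -/
open MeasureTheory Set intervalIntegral

/-- Fubini for interval integrals of jointly continuous functions. -/
lemma my_fubini_cont {f : ℝ → ℝ → ℝ} (hf : Continuous (Function.uncurry f)) (a b c d : ℝ) :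
    ∫ x in a..b, ∫ y in c..d, f x y = ∫ y in c..d, ∫ x in a..b, f x y := by
  have key : ∀ p q r s : ℝ, ∫ x in Ioc p q, ∫ y in Ioc r s, f x y
      = ∫ y in Ioc r s, ∫ x in Ioc p q, f x y := by
    intro p q r s
    apply MeasureTheory.integral_integral_swap
    rw [Measure.prod_restrict]
    have hcpt : IsCompact (Icc p q ×ˢ Icc r s) := isCompact_Icc.prod isCompact_Icc
    have h1 : IntegrableOn (Function.uncurry f) (Icc p q ×ˢ Icc r s) (volume.prod volume) := by
      rw [← Measure.volume_eq_prod]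
      exact hf.continuousOn.integrableOn_compact hcpt
    exact h1.mono_set (prod_mono Ioc_subset_Icc_self Ioc_subset_Icc_self)
  have contx : ∀ r s : ℝ, Continuous fun x => ∫ y in Ioc r s, f x y := by
    intro r s
    have h := continuous_parametric_integral_of_continuous (μ := volume) hf (isCompact_Icc (a := r) (b := s))
    simp only [integral_Icc_eq_integral_Ioc] at h
    exact h
  have conty : ∀ p q : ℝ, Continuous fun y => ∫ x in Ioc p q, f x y := by
    intro p q
    have hf' : Continuous (Function.uncurry fun y x => f x y) := hf.comp continuous_swap
    have h := continuous_parametric_integral_of_continuous (μ := volume) hf' (isCompact_Icc (a := p) (b := q))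
    simp only [integral_Icc_eq_integral_Ioc] at h
    exact h
  have L : ∀ p q : ℝ, ∫ x in Ioc p q, ∫ y in c..d, f x y
      = (∫ x in Ioc p q, ∫ y in Ioc c d, f x y) - ∫ x in Ioc p q, ∫ y in Ioc d c, f x y := by
    intro p q
    rw [← MeasureTheory.integral_sub ((contx c d).integrableOn_Ioc) ((contx d c).integrableOn_Ioc)]
    rfl
  have R : ∀ r s : ℝ, ∫ y in Ioc r s, ∫ x in a..b, f x y
      = (∫ y in Ioc r s, ∫ x in Ioc a b, f x y) - ∫ y in Ioc r s, ∫ x in Ioc b a, f x y := by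
    intro r s
    rw [← MeasureTheory.integral_sub ((conty a b).integrableOn_Ioc) ((conty b a).integrableOn_Ioc)]
    rfl
  have E1 : (∫ x in a..b, ∫ y in c..d, f x y)
      = (∫ x in Ioc a b, ∫ y in c..d, f x y) - ∫ x in Ioc b a, ∫ y in c..d, f x y := rfl
  have E2 : (∫ y in c..d, ∫ x in a..b, f x y)
      = (∫ y in Ioc c d, ∫ x in a..b, f x y) - ∫ y in Ioc d c, ∫ x in a..b, f x y := rfl
  rw [E1, E2, L a b, L b a, R c d, R d c, key a b c d, key a b d c, key b a c d, key b a d c]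
  ring


/-- Composition helper keeping `H` abstract (avoids heavy defeq unfolding). -/
lemma my_cont_comp2 {H : ℝ → ℝ → ℝ} (h : Continuous fun p : ℝ × ℝ => H p.2 p.1)
    {α : Type*} [TopologicalSpace α] {g₁ g₂ : α → ℝ} (h1 : Continuous g₁)
    (h2 : Continuous g₂) : Continuous fun a => H (g₁ a) (g₂ a) :=
  h.comp (h2.prodMk h1)

set_option maxHeartbeats 1000000 in
theorem delay_compensation_identity (u : ℝ → ℝ → ℝ) (s : ℝ → ℝ)
    (hu : ContDiff ℝ (⊤ : ℕ∞) (fun p : ℝ × ℝ => u p.1 p.2))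
    (hs : ContDiff ℝ (⊤ : ℕ∞) s)
    (heat : ∀ x t, deriv (fun τ => u x τ) t = deriv (deriv (fun y => u y t)) x)
    (hbc : ∀ t, u (s t) t = 0)
    (t D : ℝ) (hD : 0 < D)
    (hmono : StrictMonoOn s (Set.Icc t (t + D))) :
    ∫ τ in t..(t + D), ∫ x in s τ..s (t + D), deriv (deriv (fun y => u y τ)) x =
      -∫ x in s t..s (t + D), u x t := by
  set U : ℝ × ℝ → ℝ := fun p => u p.1 p.2 with hU
  have hUd : Differentiable ℝ U := hu.differentiable (by simp)
  set F : ℝ × ℝ → ℝ := fun p => fderiv ℝ U p (0, 1) with hF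
  have hFc : Continuous F :=
    (ContinuousLinearMap.apply ℝ ℝ ((0 : ℝ), (1 : ℝ))).continuous.comp
      (hu.continuous_fderiv (by simp))
  have huc : Continuous U := hu.continuous
  have hsc : Continuous s := hs.continuous
  -- time derivative of u equals F
  have hudt : ∀ x τ, HasDerivAt (fun a => u x a) (F (x, τ)) τ := by
    intro x τ
    have h1 : HasDerivAt (fun a : ℝ => ((x, a) : ℝ × ℝ)) ((0 : ℝ), (1 : ℝ)) τ := by
      simpa using ((hasDerivAt_const τ x).prodMk (hasDerivAt_id τ))
    have := (hUd (x, τ)).hasFDerivAt.comp_hasDerivAt τ h1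
    exact this
  -- pointwise identity with the second space derivative
  have hxx : ∀ τ x, deriv (deriv (fun y => u y τ)) x = F (x, τ) := by
    intro τ x
    rw [← heat x τ]
    exact (hudt x τ).deriv
  -- useful one-variable continuity facts
  have hFx : ∀ τ : ℝ, Continuous fun x => F (x, τ) :=
    fun τ => hFc.comp (continuous_id.prodMk continuous_const)
  have hFt : ∀ x : ℝ, Continuous fun τ => F (x, τ) :=
    fun x => hFc.comp (continuous_const.prodMk continuous_id)
  have hux : ∀ τ : ℝ, Continuous fun x => u x τ :=
    fun τ => huc.comp (continuous_id.prodMk continuous_const)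
  -- FTC in time
  have hftc : ∀ x r₀ r₁ : ℝ, ∫ τ in r₀..r₁, F (x, τ) = u x r₁ - u x r₀ := by
    intro x r₀ r₁
    exact intervalIntegral.integral_eq_sub_of_hasDerivAt (fun τ _ => hudt x τ)
      ((hFt x).intervalIntegrable _ _)
  -- the primitive H
  set c : ℝ := s t with hc
  set b : ℝ := s (t + D) with hb
  set H : ℝ → ℝ → ℝ := fun y τ => ∫ x in c..y, F (x, τ) with hH
  have hKc : Continuous fun p : ℝ × ℝ => H p.2 p.1 := by
    have h : Continuous (Function.uncurry fun (τ x : ℝ) => F (x, τ)) := hFc.comp continuous_swap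
    exact intervalIntegral.continuous_parametric_primitive_of_continuous (μ := volume)
      (f := fun τ x => F (x, τ)) h
  -- fubini specialised to F
  have fub : ∀ p q y : ℝ, ∫ τ in p..q, ∫ x in c..y, F (x, τ) = ∫ x in c..y, ∫ τ in p..q, F (x, τ) := by
    intro p q y
    exact my_fubini_cont (f := fun τ x => F (x, τ)) (hFc.comp continuous_swap) p q c y
  -- Step 1 : rewrite the LHS
  have inner_eq : ∀ τ : ℝ, ∫ x in s τ..b, F (x, τ) = H b τ - H (s τ) τ := by
    intro τ
    have h1 : IntervalIntegrable (fun x => F (x, τ)) volume c (s τ) :=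
      (hFx τ).intervalIntegrable _ _
    have h2 : IntervalIntegrable (fun x => F (x, τ)) volume (s τ) b :=
      (hFx τ).intervalIntegrable _ _
    have := intervalIntegral.integral_add_adjacent_intervals h1 h2
    simp only [hH]
    linarith [this]
  have step1 : (∫ τ in t..(t + D), ∫ x in s τ..b, deriv (deriv (fun y => u y τ)) x)
      = ∫ τ in t..(t + D), (H b τ - H (s τ) τ) := by
    apply intervalIntegral.integral_congr
    intro τ _
    show (∫ x in s τ..b, deriv (deriv fun y => u y τ) x) = H b τ - H (s τ) τ
    have h9 : (∫ x in s τ..b, deriv (deriv (fun y => u y τ)) x)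
        = ∫ x in s τ..b, F (x, τ) := by
      apply intervalIntegral.integral_congr
      intro x _
      exact hxx τ x
    rw [h9, inner_eq τ]
  -- continuity of the two integrands in τ
  have hHb : Continuous fun τ => H b τ := my_cont_comp2 hKc continuous_const continuous_id
  have hHs : Continuous fun τ => H (s τ) τ := my_cont_comp2 hKc hsc continuous_id
  -- Step 2 : the first piece via Fubini
  have step2 : (∫ τ in t..(t + D), H b τ) = ∫ x in c..b, (u x (t + D) - u x t) := by
    have h := fub t (t + D) b
    simp only [hH]
    rw [h]
    apply intervalIntegral.integral_congr
    intro x _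
    exact hftc x t (t + D)
  -- Step 3 : the second piece via the ODE argument
  -- φ r = ∫ τ in t..r, H (s τ) τ  and  ψ r = ∫ x in c..(s r), u x r agree everywhere
  set φ : ℝ → ℝ := fun r => ∫ τ in t..r, H (s τ) τ with hφdef
  set ψ : ℝ → ℝ := fun r => ∫ x in c..(s r), u x r with hψdef
  have hφ : ∀ r, HasDerivAt φ (H (s r) r) r := by
    intro r
    rw [hφdef]
    exact (hHs.integral_hasStrictDerivAt t r).hasDerivAt
  have hψ : ∀ r₀, HasDerivAt ψ (H (s r₀) r₀) r₀ := by
    intro r₀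
    -- rewrite ψ
    have hψeq : ∀ r, ψ r = (∫ x in c..(s r), u x r₀) + ∫ τ in r₀..r, H (s r) τ := by
      intro r
      have hpt : ∀ x, u x r = u x r₀ + ∫ τ in r₀..r, F (x, τ) := by
        intro x
        rw [hftc x r₀ r]; ring
      have e1 : ψ r = ∫ x in c..(s r), (u x r₀ + ∫ τ in r₀..r, F (x, τ)) := by
        rw [hψdef]
        apply intervalIntegral.integral_congr
        intro x _
        exact hpt x
      have hcont2 : Continuous fun x => ∫ τ in r₀..r, F (x, τ) := by
        have : Continuous (Function.uncurry fun (x τ : ℝ) => F (x, τ)) := by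
          exact hFc
        exact intervalIntegral.continuous_parametric_intervalIntegral_of_continuous'
          (μ := volume) (f := fun x τ => F (x, τ)) this r₀ r
      rw [e1, intervalIntegral.integral_add ((hux r₀).intervalIntegrable _ _)
        (hcont2.intervalIntegrable _ _)]
      congr 1
      rw [← fub r₀ r (s r)]
    have hψfun : ψ = fun r => (∫ x in c..(s r), u x r₀) + ∫ τ in r₀..r, H (s r) τ :=
      funext hψeq
    rw [hψfun]
    -- part 1 : derivative 0 thanks to the boundary condition
    have h1 : HasDerivAt (fun r => ∫ x in c..(s r), u x r₀) 0 r₀ := by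
      have hprim : HasDerivAt (fun y => ∫ x in c..y, u x r₀) (u (s r₀) r₀) (s r₀) := by
        have := ((hux r₀).integral_hasStrictDerivAt c (s r₀)).hasDerivAt
        rwa [hbc r₀] at this ⊢
      have hsd : HasDerivAt s (deriv s r₀) r₀ := (hs.differentiable (by simp) r₀).hasDerivAt
      have := hprim.comp r₀ hsd
      rw [hbc r₀, zero_mul] at this
      exact this
    -- part 2 : ε-δ argument for the moving-parameter integral
    have h2 : HasDerivAt (fun r => ∫ τ in r₀..r, H (s r) τ) (H (s r₀) r₀) r₀ := by
      rw [hasDerivAt_iff_isLittleO]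
      simp only [intervalIntegral.integral_same, sub_zero]
      rw [Asymptotics.isLittleO_iff]
      intro ε hε
      have hG : Continuous fun p : ℝ × ℝ => H (s p.1) p.2 :=
        my_cont_comp2 hKc (hsc.comp continuous_fst) continuous_snd
      have hGc : ContinuousAt (fun p : ℝ × ℝ => H (s p.1) p.2) (r₀, r₀) := hG.continuousAt
      rcases Metric.continuousAt_iff.1 hGc ε hε with ⟨δ, hδpos, hδ⟩
      filter_upwards [Metric.ball_mem_nhds r₀ hδpos] with r hr
      have hconst : (r - r₀) • H (s r₀) r₀ = ∫ τ in r₀..r, H (s r₀) r₀ := by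
        rw [intervalIntegral.integral_const]
      have hHctn : Continuous fun τ => H (s r) τ :=
        my_cont_comp2 hKc continuous_const continuous_id
      rw [hconst, ← intervalIntegral.integral_sub (hHctn.intervalIntegrable _ _)
        ((continuous_const).intervalIntegrable _ _)]
      have hle : ∀ τ ∈ Set.uIoc r₀ r, ‖H (s r) τ - H (s r₀) r₀‖ ≤ ε := by
        intro τ hτ
        have hτr : |τ - r₀| ≤ |r - r₀| := by
          rcases Set.mem_uIoc.1 hτ with h | h
          · rw [abs_of_pos (by linarith), abs_of_pos (by linarith)] <;> linarith [h.1, h.2]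
          · rw [abs_of_nonpos (by linarith [h.1, h.2]), abs_of_neg (by linarith [h.1, h.2])]
            linarith [h.1, h.2]
        have hd : dist ((r, τ) : ℝ × ℝ) (r₀, r₀) < δ := by
          rw [Prod.dist_eq]
          have h1 : dist r r₀ < δ := by simpa [Real.dist_eq] using hr
          have h2 : dist τ r₀ < δ := by
            rw [Real.dist_eq]
            calc |τ - r₀| ≤ |r - r₀| := hτr
              _ < δ := by simpa [Real.dist_eq] using hr
          exact max_lt h1 h2
        exact le_of_lt (by simpa [Real.dist_eq] using hδ hd)
      calc ‖∫ τ in r₀..r, (H (s r) τ - H (s r₀) r₀)‖ ≤ ε * |r - r₀| :=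
            intervalIntegral.norm_integral_le_of_norm_le_const hle
        _ = ε * ‖r - r₀‖ := by rw [Real.norm_eq_abs]
    have := h1.add h2
    rw [zero_add] at this
    exact this
  -- φ - ψ is constant
  have hconst : ∀ r, φ r - ψ r = φ t - ψ t := by
    have hd : ∀ r, HasDerivAt (fun r' => φ r' - ψ r') 0 r := by
      intro r
      have := (hφ r).sub (hψ r)
      rw [sub_self] at this
      exact this
    intro r
    exact is_const_of_deriv_eq_zero
      (fun x => ((hd x).differentiableAt : DifferentiableAt ℝ _ x))
      (fun x => (hd x).deriv) r t
  have hφt : φ t = 0 := by simp [hφdef]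
  have hψt : ψ t = 0 := by simp [hψdef, hc]
  have step3 : (∫ τ in t..(t + D), H (s τ) τ) = ∫ x in c..b, u x (t + D) := by
    have h := hconst (t + D)
    rw [hφt, hψt] at h
    have : φ (t + D) = ψ (t + D) := by linarith
    simpa [hφdef, hψdef, hb] using this
  -- assemble everything
  rw [step1, intervalIntegral.integral_sub (hHb.intervalIntegrable _ _)
      (hHs.intervalIntegrable _ _), step2, step3,
      intervalIntegral.integral_sub ((hux (t + D)).intervalIntegrable _ _)
      ((hux t).intervalIntegrable _ _)]
  ring
end
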